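/- Let n ≥ 1, N = 2^n, and let u : Fin N → ℂ satisfy ‖u j‖ = 1 for all j. Define for 1 ≤ j ≤ N/2 − 1 the character value χ_j(u) = u(2j−2) · (u(2j−1))⁻¹ · (u(2j))⁻¹ · u(2j+1). Then χ_j(u) = 1 for all 1 ≤ j ≤ N/2 − 1 if and only if there exist v : Fin 2^(n−1) → ℂ and w : Fin 2 → ℂ such that u j = v(⌊j/2⌋) · w(j mod 2) for all j ∈ Fin N. -/

import Mathlib

/-- For `n ≥ 1` and `j < 2^n`, the quotient `j / 2` is a valid `(n-1)`-qubit index. -/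
lemma div2_lt {n : ℕ} (hn : 1 ≤ n) (j : Fin (2^n)) : (j : ℕ) / 2 < 2^(n-1) := by
  have h : (2:ℕ)^n = 2^(n-1) * 2 := by
    conv_lhs => rw [show n = (n-1) + 1 by omega]
    rw [pow_succ]
  have hj := j.isLt
  omega

/-- Extension of a vector indexed by `Fin N` to all of `ℕ` (by `1` out of range);
in the statements below it is only ever evaluated in range. -/
noncomputable def extend {N : ℕ} (d : Fin N → ℂ) (m : ℕ) : ℂ :=
  if h : m < N then d ⟨m, h⟩ else 1

/-- The character `χ_j(d) = d(2j-2) · d(2j-1)⁻¹ · d(2j)⁻¹ · d(2j+1)`. -/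
noncomputable def chiFn {N : ℕ} (d : Fin N → ℂ) (j : ℕ) : ℂ :=
  extend d (2*j - 2) * (extend d (2*j - 1))⁻¹ * (extend d (2*j))⁻¹ * extend d (2*j + 1)

/-!
Writing `r k = u(2k+1) / u(2k)` for the ratio inside the `k`-th pair of entries, the character is
`χ_j(u) = r j / r (j-1)`. Hence all characters are trivial iff `r` is constant, say `r ≡ c`, which
for a vector without zero entries says exactly `u = v ⊗ (1, c)` with `v k = u(2k)`.
-/

lemma extend_eq {N : ℕ} (d : Fin N → ℂ) {m : ℕ} (h : m < N) : extend d m = d ⟨m, h⟩ :=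
  dif_pos h

lemma extend_ne_zero {N : ℕ} {d : Fin N → ℂ} (hd : ∀ i, d i ≠ 0) (m : ℕ) : extend d m ≠ 0 := by
  unfold extend
  split
  · exact hd _
  · exact one_ne_zero

noncomputable def pairRatio {N : ℕ} (d : Fin N → ℂ) (k : ℕ) : ℂ :=
  extend d (2 * k + 1) / extend d (2 * k)

lemma chiFn_eq_pairRatio_div {N : ℕ} (d : Fin N → ℂ) {j : ℕ} (hj : 1 ≤ j) :
    chiFn d j = pairRatio d j / pairRatio d (j - 1) := by
  obtain ⟨i, rfl⟩ := Nat.exists_eq_add_of_le' hj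
  simp only [chiFn, pairRatio, Nat.add_sub_cancel, mul_add, mul_one,
    show 2 * i + 2 - 1 = 2 * i + 1 by omega, div_eq_mul_inv, mul_inv, inv_inv]
  ring

lemma forall_div_pred_eq_one_iff {K : Type*} [Field K] {r : ℕ → K} (hr : r 0 ≠ 0) (M : ℕ) :
    (∀ j, 1 ≤ j → j < M → r j / r (j - 1) = 1) ↔ ∀ k < M, r k = r 0 := by
  constructor
  · intro h k hk
    induction k with
    | zero => rfl
    | succ k ih => exact (eq_of_div_eq_one (h (k + 1) (by omega) hk)).trans (ih (by omega))
  · intro h j hj1 hjM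
    rw [h j hjM, h (j - 1) (by omega), div_self hr]

section Tensor

variable {n : ℕ} {u : Fin (2 ^ n) → ℂ}

lemma two_mul_add_lt_two_pow (hn : 1 ≤ n) {k : ℕ} (hk : k < 2 ^ (n - 1)) (b : Fin 2) :
    2 * k + b < 2 ^ n := by
  have : 2 ^ n = 2 * 2 ^ (n - 1) := by rw [← pow_succ', Nat.sub_add_cancel hn]
  omega

lemma extend_two_mul_add_of_tensor (hn : 1 ≤ n) {v : Fin (2 ^ (n - 1)) → ℂ} {w : Fin 2 → ℂ}
    (hvw : ∀ j : Fin (2 ^ n), u j = v ⟨(j : ℕ) / 2, div2_lt hn j⟩ *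
      w ⟨(j : ℕ) % 2, Nat.mod_lt _ (by norm_num)⟩)
    {k : ℕ} (hk : k < 2 ^ (n - 1)) (b : Fin 2) :
    extend u (2 * k + b) = v ⟨k, hk⟩ * w b := by
  rw [extend_eq u (two_mul_add_lt_two_pow hn hk b), hvw]
  congr 2 <;> ext <;> dsimp only <;> omega

lemma pairRatio_of_tensor (hn : 1 ≤ n) (hu : ∀ j, u j ≠ 0)
    {v : Fin (2 ^ (n - 1)) → ℂ} {w : Fin 2 → ℂ}
    (hvw : ∀ j : Fin (2 ^ n), u j = v ⟨(j : ℕ) / 2, div2_lt hn j⟩ *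
      w ⟨(j : ℕ) % 2, Nat.mod_lt _ (by norm_num)⟩)
    {k : ℕ} (hk : k < 2 ^ (n - 1)) :
    pairRatio u k = w 1 / w 0 := by
  have h0 := extend_two_mul_add_of_tensor hn hvw hk 0
  have h1 := extend_two_mul_add_of_tensor hn hvw hk 1
  simp only [Fin.val_zero, Fin.val_one, add_zero] at h0 h1
  have hv : v ⟨k, hk⟩ ≠ 0 := left_ne_zero_of_mul (h0 ▸ extend_ne_zero hu _)
  rw [pairRatio, h0, h1, mul_div_mul_left _ _ hv]

lemma exists_tensor_iff_pairRatio_eq (hn : 1 ≤ n) (hu : ∀ j, u j ≠ 0) :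
    (∃ (v : Fin (2 ^ (n - 1)) → ℂ) (w : Fin 2 → ℂ), ∀ j : Fin (2 ^ n),
      u j = v ⟨(j : ℕ) / 2, div2_lt hn j⟩ * w ⟨(j : ℕ) % 2, Nat.mod_lt _ (by norm_num)⟩) ↔
      ∀ k < 2 ^ (n - 1), pairRatio u k = pairRatio u 0 := by
  constructor
  · rintro ⟨v, w, hvw⟩ k hk
    rw [pairRatio_of_tensor hn hu hvw hk,
      pairRatio_of_tensor hn hu hvw (k.zero_le.trans_lt hk)]
  · intro hr
    refine ⟨fun k => extend u (2 * k), ![1, pairRatio u 0], fun j => ?_⟩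
    rw [← extend_eq u j.isLt]
    conv_lhs => rw [← Nat.div_add_mod j 2]
    rcases Nat.mod_two_eq_zero_or_one j with h | h
    · simp [h]
    · have hb : (⟨(j : ℕ) % 2, Nat.mod_lt _ (by norm_num)⟩ : Fin 2) = 1 := Fin.ext h
      rw [hb, h, Matrix.cons_val_one, Matrix.cons_val_zero, ← hr _ (div2_lt hn j), pairRatio,
        mul_div_cancel₀ _ (extend_ne_zero hu _)]

end Tensor

/-- all characters `χ_j(u)`, `1 ≤ j ≤ 2^(n-1) - 1`, equal `1` iff the
diagonal unitary `u` factors as a tensor on the last qubit. -/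
theorem chi_eq_one_iff_tensor (n : ℕ) (hn : 1 ≤ n)
    (u : Fin (2^n) → ℂ) (hu : ∀ j, ‖u j‖ = 1) :
    (∀ j : ℕ, 1 ≤ j → j ≤ 2^(n-1) - 1 → chiFn u j = 1) ↔
      (∃ (v : Fin (2^(n-1)) → ℂ) (w : Fin 2 → ℂ),
        ∀ j : Fin (2^n),
          u j = v ⟨(j : ℕ) / 2, div2_lt hn j⟩ *
            w ⟨(j : ℕ) % 2, Nat.mod_lt _ (by norm_num)⟩) := by
  have hu0 (j) : u j ≠ 0 := norm_ne_zero_iff.mp (by rw [hu j]; exact one_ne_zero)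
  have hr0 : pairRatio u 0 ≠ 0 := div_ne_zero (extend_ne_zero hu0 _) (extend_ne_zero hu0 _)
  rw [exists_tensor_iff_pairRatio_eq hn hu0, ← forall_div_pred_eq_one_iff hr0]
  refine forall_congr' fun j => forall_congr' fun hj => ?_
  rw [chiFn_eq_pairRatio_div u hj, Nat.le_sub_one_iff_lt (Nat.two_pow_pos _)]
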